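/- For n ≥ 1 the generalized Hecke operators at the prime 2 satisfy T_{2^n} ∘ T_2 = T_{2^{n+1}} + 2·T_{2^n} ∘ Ψ_{√2} + 2·T_{2^{n-1}} ∘ Ψ_2, where Ψ_u(h) = h ∥ [[u,0],[0,u]]. -/

import Mathlib

noncomputable section

/-- The coefficient ring `K = 𝓛[…, x_m^{[r]}, …]` with `𝓛 = ℂ` (which contains all
roots of unity), one variable `x_m^{[r]}` for each `m ∈ ℕ` and real index `r`
(the indices used are `r ∈ ℕ ∪ √2·ℕ`). -/
abbrev RepRing := MvPolynomial (ℕ × ℝ) ℂ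

/-- The endomorphism `ψ_u` of `K` sending `x_m^{[r]}` to `x_m^{[ru]}`. -/
def psiK (u : ℝ) : RepRing →ₐ[ℂ] RepRing :=
  MvPolynomial.rename (fun p => (p.1, p.2 * u))

/-- A formal series `Σ_e c_e q^e` with exponents `e ∈ ℚ` and coefficients in `K`,
recorded by its coefficient function. -/
abbrev FormalSeries := ℚ → RepRing

/-- The slash action of `α = s·[[u, v],[0, y]]` (with `s > 0` a real scalar, typically
`1` or `√2`, and `u, v, y` rational): `x_m^{[r]} ↦ x_m^{[r·su]}`, and
`q^e ↦ e^{2πive/y}·q^{ue/y}`.  In terms of coefficient functions, the coefficient of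
`q^{e'}` of `h ∥ α` is `e^{2πive'/u}·ψ_{su}(c_{e'y/u})`. -/
def slashA (h : FormalSeries) (s : ℝ) (u v y : ℚ) : FormalSeries := fun e' =>
  Complex.exp (2 * (Real.pi : ℂ) * Complex.I * ((v * e' / u : ℚ) : ℂ)) •
    psiK (s * (u : ℝ)) (h (e' * y / u))

/-- The generalized Hecke operator
`T_n h = Σ_{uy=n, 0≤v<y} h ∥ [[u,v],[0,y]] + Σ_{uy=n/2, 0≤v<2y} h ∥ [[√2u, v/√2],[0,√2y]]`,
the second sum being present only when `n` is even.  Note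
`[[√2u, v/√2],[0,√2y]] = √2·[[u, v/2],[0,y]]`. -/
def heckeT (n : ℕ) (h : FormalSeries) : FormalSeries :=
  (∑ x ∈ n.divisorsAntidiagonal, ∑ v ∈ Finset.range x.2,
    slashA h 1 (x.1 : ℚ) (v : ℚ) (x.2 : ℚ))
  + (if Even n then
      ∑ x ∈ (n / 2).divisorsAntidiagonal, ∑ v ∈ Finset.range (2 * x.2),
        slashA h (Real.sqrt 2) (x.1 : ℚ) ((v : ℚ) / 2) (x.2 : ℚ)
    else 0)

/-- `h` is a formal series supported on integer exponents (e.g. `q^{-1} + Σ_{m≥1} c_m q^m`). -/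
def IntSupported (h : FormalSeries) : Prop :=
  ∀ e : ℚ, (∀ z : ℤ, (z : ℚ) ≠ e) → h e = 0

/-- `Ψ_u h = h ∥ [[u,0],[0,u]]`, for `u = √2` (realized as `√2·[[1,0],[0,1]]`). -/
def PsiSqrtTwo (h : FormalSeries) : FormalSeries := slashA h (Real.sqrt 2) 1 0 1

/-- `Ψ_2 h = h ∥ [[2,0],[0,2]]`. -/
def PsiTwo (h : FormalSeries) : FormalSeries := slashA h 1 2 0 2

/-!
Write `T_{2^k}` as a sum of rows `Σ_v h ∥ s·[[u, v], [0, y]]` over `u y = 2^k`, with `v` running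
over `ℤ / yℤ` for `s = 1` and over `(½ℤ) / yℤ` for `s = √2`, and expand `T_{2^n} (T_2 h)` by
`h ∥ α ∥ β = h ∥ αβ`. Since `h` is supported on integral exponents, `h ∥ s·[[u, v], [0, y]]`
depends only on `v mod y`. The five terms of `T_2` then act on rows as follows: `[[1, 0], [0, 2]]`
and `[[1, 1], [0, 2]]` together turn a row of height `y` into the row of height `2y` (giving
`T_{2^{n+1}}`), `[[2, 0], [0, 1]]` runs twice through each row of `T_{2^{n-1}} ∘ Ψ_2`, and
`√2·[[1, ½], [0, 1]]` reproduces the rows of `Ψ_{√2}` translated by half a period. The rows of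
height `1` that are left over cancel.
-/
open Finset Function

theorem Function.Periodic.sum_range_comp_add_nat {M : Type*} [AddCommMonoid M] {g : ℕ → M}
    {N : ℕ} (hg : Periodic g N) (c : ℕ) :
    ∑ v ∈ range N, g (v + c) = ∑ v ∈ range N, g v := by
  calc ∑ v ∈ range N, g (v + c) = ∑ v ∈ Ico c (c + N), g (v % N) := by
        rw [sum_Ico_eq_sum_range, Nat.add_sub_cancel_left]
        exact sum_congr rfl fun v _ => by rw [add_comm, hg.map_mod_nat]
    _ = ∑ v ∈ range N, g v := by
        rw [← Nat.image_Ico_mod c N, sum_image (Nat.mod_injOn_Ico c N)]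

theorem Function.Periodic.sum_range_mul {M : Type*} [AddCommMonoid M] {g : ℕ → M}
    {N : ℕ} (hg : Periodic g N) (k : ℕ) :
    ∑ v ∈ range (k * N), g v = k • ∑ v ∈ range N, g v := by
  induction k with
  | zero => simp
  | succ k ih =>
    rw [add_mul, one_mul, sum_range_add, ih, succ_nsmul]
    congr 1
    exact sum_congr rfl fun v _ => by simpa [add_comm] using (hg.nat_mul k) v

theorem Nat.sum_divisorsAntidiagonal_prime_pow {M : Type*} [AddCommMonoid M] {p : ℕ}
    (hp : p.Prime) (k : ℕ) (f : ℕ × ℕ → M) :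
    ∑ x ∈ (p ^ k).divisorsAntidiagonal, f x = ∑ q ∈ antidiagonal k, f (p ^ q.1, p ^ q.2) := by
  let ι : ℕ ↪ ℕ := ⟨(p ^ ·), Nat.pow_right_injective hp.two_le⟩
  have hsub := Nat.antidiagonal_map_subset_divisorsAntidiagonal_pow hp.one_lt k
  have hcard : ((p ^ k).divisorsAntidiagonal).card ≤ ((antidiagonal k).map (ι.prodMap ι)).card := by
    rw [← Nat.map_div_right_divisors, card_map, card_map, Nat.divisors_prime_pow hp, card_map,
      card_range, Nat.card_antidiagonal]
  rw [← eq_of_subset_of_card_le hsub hcard, sum_map]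
  rfl

lemma psiK_psiK (a b : ℝ) (p : RepRing) : psiK a (psiK b p) = psiK (b * a) p := by
  simp only [psiK, MvPolynomial.rename_rename, Function.comp_def, mul_assoc]

lemma slashA_add (g₁ g₂ : FormalSeries) (s : ℝ) (u v y : ℚ) :
    slashA (g₁ + g₂) s u v y = slashA g₁ s u v y + slashA g₂ s u v y := by
  funext e
  simp [slashA, smul_add]

lemma slashA_slashA (h : FormalSeries) (s₁ s₂ : ℝ) {u₁ u₂ : ℚ} (v₁ y₁ v₂ y₂ : ℚ)
    (hu₁ : u₁ ≠ 0) (hu₂ : u₂ ≠ 0) :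
    slashA (slashA h s₁ u₁ v₁ y₁) s₂ u₂ v₂ y₂
      = slashA h (s₁ * s₂) (u₁ * u₂) (u₁ * v₂ + v₁ * y₂) (y₁ * y₂) := by
  funext e
  simp only [slashA, map_smul, smul_smul, psiK_psiK, ← Complex.exp_add]
  congr 2
  · rw [← mul_add, ← Rat.cast_add]
    congr 2
    field_simp
  · congr 1
    push_cast
    ring
  · congr 1
    field_simp

lemma slashA_add_period {h : FormalSeries} (hh : IntSupported h) (s : ℝ) (u v y : ℚ) :
    slashA h s u (v + y) y = slashA h s u v y := by
  funext e
  rcases eq_or_ne u 0 with rfl | hu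
  · simp [slashA]
  by_cases h0 : h (e * y / u) = 0
  · simp [slashA, h0]
  obtain ⟨z, hz⟩ : ∃ z : ℤ, (z : ℚ) = e * y / u := by
    by_contra hc
    exact h0 (hh _ (by simpa using hc))
  have harg : (v + y) * e / u = v * e / u + z := by rw [hz]; field_simp
  simp only [slashA, harg, Rat.cast_add, Rat.cast_intCast, mul_add, Complex.exp_add]
  rw [mul_comm _ (z : ℂ), Complex.exp_int_mul_two_pi_mul_I, mul_one]

/-- `Σ h ∥ s·[[u, v], [0, y]]` over the translates `v ∈ (1/d)ℤ / yℤ`. -/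
def slashRow (h : FormalSeries) (s : ℝ) (d u y : ℕ) : FormalSeries :=
  ∑ v ∈ range (d * y), slashA h s u ((v : ℚ) / d) y

lemma slashRow_add (g₁ g₂ : FormalSeries) (s : ℝ) (d u y : ℕ) :
    slashRow (g₁ + g₂) s d u y = slashRow g₁ s d u y + slashRow g₂ s d u y := by
  simp only [slashRow, slashA_add, sum_add_distrib]

lemma slashRow_one_one (h : FormalSeries) (s : ℝ) (u : ℕ) :
    slashRow h s 1 u 1 = slashA h s u 0 1 := by
  simp [slashRow]

lemma slashRow_two_one (h : FormalSeries) (s : ℝ) (u : ℕ) :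
    slashRow h s 2 u 1 = slashA h s u 0 1 + slashA h s u (1 / 2) 1 := by
  simp [slashRow, sum_range_succ]

lemma periodic_slashA_div {h : FormalSeries} (hh : IntSupported h) (s : ℝ) {d : ℕ}
    (hd : d ≠ 0) (u : ℚ) (y : ℕ) :
    Periodic (fun v : ℕ => slashA h s u ((v : ℚ) / d) y) (d * y) := fun v => by
  dsimp only
  rw [← slashA_add_period hh s u (v / d) y]
  congr 1
  push_cast
  field_simp

lemma slashRow_slashA (h : FormalSeries) (s₁ s : ℝ) {u₁ : ℚ} (v₁ y₁ : ℚ) (hu₁ : u₁ ≠ 0)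
    (d : ℕ) {u : ℕ} (hu : u ≠ 0) (y : ℕ) :
    slashRow (slashA h s₁ u₁ v₁ y₁) s d u y
      = ∑ v ∈ range (d * y),
          slashA h (s₁ * s) (u₁ * u) (u₁ * (v / d) + v₁ * y) (y₁ * y) :=
  sum_congr rfl fun _ _ => slashA_slashA h s₁ s _ _ _ _ hu₁ (Nat.cast_ne_zero.mpr hu)

lemma slashRow_diag_one_two_add (h : FormalSeries) (s : ℝ) (d : ℕ) {u : ℕ} (hu : u ≠ 0)
    (y : ℕ) :
    slashRow (slashA h 1 1 0 2) s d u y + slashRow (slashA h 1 1 1 2) s d u y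
      = slashRow h s d u (2 * y) := by
  obtain rfl | hd := eq_or_ne d 0
  · simp [slashRow]
  rw [slashRow_slashA _ _ _ _ _ one_ne_zero _ hu, slashRow_slashA _ _ _ _ _ one_ne_zero _ hu,
    slashRow, show d * (2 * y) = d * y + d * y by ring, sum_range_add]
  simp only [one_mul, zero_mul, add_zero, Nat.cast_mul, Nat.cast_add, Nat.cast_ofNat]
  congr 1
  refine sum_congr rfl fun v _ => ?_
  congr 1
  field_simp
  ring

lemma slashRow_diag_two_one_two_mul {h : FormalSeries} (hh : IntSupported h) (s : ℝ) {u : ℕ}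
    (hu : u ≠ 0) (y : ℕ) :
    slashRow (slashA h 1 2 0 1) s 1 u (2 * y) = 2 • slashRow (PsiTwo h) s 1 u y := by
  have hg : Periodic (fun v : ℕ => slashA h s (2 * u) (2 * v) (2 * y)) y := fun v => by
    simp only [Nat.cast_add, mul_add]
    exact slashA_add_period hh _ _ _ _
  rw [slashRow_slashA _ _ _ _ _ two_ne_zero _ hu, PsiTwo,
    slashRow_slashA _ _ _ _ _ two_ne_zero _ hu]
  simp only [one_mul, zero_mul, add_zero, Nat.cast_mul, Nat.cast_one, Nat.cast_ofNat, div_one]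
  exact hg.sum_range_mul 2

lemma slashRow_diag_two_one_denom_two {h : FormalSeries} (hh : IntSupported h) (s : ℝ) {u : ℕ}
    (hu : u ≠ 0) (y : ℕ) :
    slashRow (slashA h 1 2 0 1) s 2 u y = 2 • slashRow h s 1 (2 * u) y := by
  rw [slashRow_slashA _ _ _ _ _ two_ne_zero _ hu, slashRow, one_mul,
    ← (periodic_slashA_div hh s one_ne_zero _ y).sum_range_mul 2]
  simp only [one_mul, zero_mul, add_zero, Nat.cast_mul, Nat.cast_one, Nat.cast_ofNat, div_one]
  exact sum_congr rfl fun v _ => by rw [mul_div_cancel₀ _ two_ne_zero]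

lemma slashRow_halfTranslate_of_even {h : FormalSeries} (hh : IntSupported h) (s : ℝ) (d : ℕ)
    {u : ℕ} (hu : u ≠ 0) {y : ℕ} (hdy : Even (d * y)) :
    slashRow (slashA h √2 1 (1 / 2) 1) s d u y = slashRow (PsiSqrtTwo h) s d u y := by
  obtain rfl | hd := eq_or_ne d 0
  · simp [slashRow]
  obtain ⟨c, hc⟩ := hdy
  rw [PsiSqrtTwo, slashRow_slashA _ _ _ _ _ one_ne_zero _ hu,
    slashRow_slashA _ _ _ _ _ one_ne_zero _ hu]
  simp only [one_mul, zero_mul, add_zero]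
  rw [← (periodic_slashA_div hh (√2 * s) hd u y).sum_range_comp_add_nat c]
  refine sum_congr rfl fun v _ => ?_
  have hc' : (y : ℚ) = 2 * c / d := by
    rw [eq_div_iff (Nat.cast_ne_zero.mpr hd)]
    exact_mod_cast (by rw [mul_comm, hc]; ring : y * d = 2 * c)
  congr 1
  rw [hc']
  push_cast
  ring

lemma slashRow_psiTwo_denom_two (h : FormalSeries) (s : ℝ) {u : ℕ} (hu : u ≠ 0) (y : ℕ) :
    slashRow (PsiTwo h) s 2 u y = slashRow h s 1 (2 * u) (2 * y) := by
  rw [PsiTwo, slashRow_slashA _ _ _ _ _ two_ne_zero _ hu, slashRow, one_mul]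
  simp only [one_mul, zero_mul, add_zero, Nat.cast_mul, Nat.cast_one, Nat.cast_ofNat, div_one]
  exact sum_congr rfl fun v _ => by rw [mul_div_cancel₀ _ two_ne_zero]

def slashRowSum (h : FormalSeries) (s : ℝ) (d k : ℕ) : FormalSeries :=
  ∑ p ∈ antidiagonal k, slashRow h s d (2 ^ p.1) (2 ^ p.2)

lemma slashRowSum_add (g₁ g₂ : FormalSeries) (s : ℝ) (d k : ℕ) :
    slashRowSum (g₁ + g₂) s d k = slashRowSum g₁ s d k + slashRowSum g₂ s d k := by
  simp only [slashRowSum, slashRow_add, sum_add_distrib]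

lemma slashRowSum_succ (h : FormalSeries) (s : ℝ) (d k : ℕ) :
    slashRowSum h s d (k + 1)
      = slashRow h s d (2 ^ (k + 1)) 1
        + ∑ p ∈ antidiagonal k, slashRow h s d (2 ^ p.1) (2 * 2 ^ p.2) := by
  simp only [slashRowSum, Nat.sum_antidiagonal_succ', pow_zero, pow_succ']

lemma heckeT_one (h : FormalSeries) : heckeT 1 h = slashA h 1 1 0 1 := by
  simp [heckeT]

lemma heckeT_two_pow_succ (h : FormalSeries) (k : ℕ) :
    heckeT (2 ^ (k + 1)) h = slashRowSum h 1 1 (k + 1) + slashRowSum h √2 2 k := by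
  have hhalf : 2 ^ (k + 1) / 2 = 2 ^ k := by rw [pow_succ, Nat.mul_div_cancel _ two_pos]
  rw [heckeT, if_pos (by simp [Nat.even_pow]), hhalf,
    Nat.sum_divisorsAntidiagonal_prime_pow Nat.prime_two,
    Nat.sum_divisorsAntidiagonal_prime_pow Nat.prime_two]
  simp [slashRowSum, slashRow]

lemma heckeT_two (h : FormalSeries) :
    heckeT 2 h = slashA h 1 1 0 2 + slashA h 1 1 1 2 + slashA h 1 2 0 1 + PsiSqrtTwo h
      + slashA h √2 1 (1 / 2) 1 := by
  rw [← pow_one 2, heckeT_two_pow_succ]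
  simp [slashRowSum, slashRow, PsiSqrtTwo, sum_range_succ, Nat.sum_antidiagonal_succ]
  abel

lemma slashRowSum_diag_one_two_add (h : FormalSeries) (s : ℝ) (d k : ℕ) :
    slashRowSum (slashA h 1 1 0 2) s d k + slashRowSum (slashA h 1 1 1 2) s d k
      + slashRow h s d (2 ^ (k + 1)) 1 = slashRowSum h s d (k + 1) := by
  rw [slashRowSum_succ, slashRowSum, slashRowSum, ← sum_add_distrib, add_comm]
  congr 1
  exact sum_congr rfl fun p _ => slashRow_diag_one_two_add h s d (by positivity) _

lemma slashRowSum_diag_two_one_denom_one {h : FormalSeries} (hh : IntSupported h) (s : ℝ)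
    (k : ℕ) :
    slashRowSum (slashA h 1 2 0 1) s 1 (k + 1)
      = slashRow h s 1 (2 ^ (k + 2)) 1 + 2 • slashRowSum (PsiTwo h) s 1 k := by
  rw [slashRowSum_succ, slashRowSum, smul_sum]
  congr 1
  · rw [slashRow_one_one, slashRow_one_one,
      slashA_slashA _ _ _ _ _ _ _ two_ne_zero (by positivity)]
    push_cast
    ring_nf
  · exact sum_congr rfl fun p _ => slashRow_diag_two_one_two_mul hh s (by positivity) _

lemma slashRowSum_diag_two_one_denom_two {h : FormalSeries} (hh : IntSupported h) (s : ℝ)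
    (k : ℕ) :
    slashRowSum (slashA h 1 2 0 1) s 2 k
      = 2 • ∑ p ∈ antidiagonal k, slashRow h s 1 (2 ^ (p.1 + 1)) (2 ^ p.2) := by
  rw [slashRowSum, smul_sum]
  exact sum_congr rfl fun p _ => by
    rw [slashRow_diag_two_one_denom_two hh s (by positivity), pow_succ']

lemma slashRowSum_halfTranslate_denom_one {h : FormalSeries} (hh : IntSupported h) (s : ℝ)
    (k : ℕ) :
    slashRowSum (slashA h √2 1 (1 / 2) 1) s 1 (k + 1) + slashA h (√2 * s) (2 ^ (k + 1)) 0 1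
      = slashRowSum (PsiSqrtTwo h) s 1 (k + 1) + slashA h (√2 * s) (2 ^ (k + 1)) (1 / 2) 1 := by
  have hrows := sum_congr rfl fun (p : ℕ × ℕ) (_ : p ∈ antidiagonal k) =>
    slashRow_halfTranslate_of_even hh s 1 (u := 2 ^ p.1) (by positivity)
      (y := 2 * 2 ^ p.2) (by simp)
  rw [slashRowSum_succ, slashRowSum_succ, hrows, slashRow_one_one, slashRow_one_one, PsiSqrtTwo,
    slashA_slashA _ _ _ _ _ _ _ one_ne_zero (by positivity),
    slashA_slashA _ _ _ _ _ _ _ one_ne_zero (by positivity)]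
  simp only [one_mul, mul_one, mul_zero, add_zero, zero_add]
  push_cast
  abel

lemma slashRowSum_halfTranslate_denom_two {h : FormalSeries} (hh : IntSupported h) (s : ℝ)
    (k : ℕ) :
    slashRowSum (slashA h √2 1 (1 / 2) 1) s 2 k = slashRowSum (PsiSqrtTwo h) s 2 k :=
  sum_congr rfl fun _ _ => slashRow_halfTranslate_of_even hh s 2 (by positivity) (by simp)

lemma heckeT_two_pow_psiTwo_add (h : FormalSeries) (k : ℕ) :
    heckeT (2 ^ k) (PsiTwo h) + slashA h √2 (2 ^ (k + 1)) 0 1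
      = slashRowSum (PsiTwo h) 1 1 k
        + ∑ p ∈ antidiagonal k, slashRow h √2 1 (2 ^ (p.1 + 1)) (2 ^ p.2) := by
  cases k with
  | zero => simp [heckeT_one, slashRowSum, slashRow_one_one]
  | succ k =>
    rw [heckeT_two_pow_succ, add_assoc, Nat.sum_antidiagonal_succ']
    simp only [pow_zero, slashRow_one_one, slashRowSum]
    rw [add_comm (∑ p ∈ antidiagonal k, _)]
    congr 2
    · push_cast
      rfl
    · refine sum_congr rfl fun p _ => ?_
      rw [slashRow_psiTwo_denom_two _ _ (by positivity), pow_succ', pow_succ']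

/-- For `n ≥ 1`, the generalized Hecke operators at the prime `2` satisfy
`T_{2^n} ∘ T_2 = T_{2^{n+1}} + 2·T_{2^n} ∘ Ψ_{√2} + 2·T_{2^{n-1}} ∘ Ψ_2`. -/
theorem heckeT_two_pow (n : ℕ) (hn : 1 ≤ n) (h : FormalSeries) (hsupp : IntSupported h) :
    heckeT (2 ^ n) (heckeT 2 h)
      = heckeT (2 ^ (n + 1)) h + 2 • heckeT (2 ^ n) (PsiSqrtTwo h)
        + 2 • heckeT (2 ^ (n - 1)) (PsiTwo h) := by
  obtain ⟨m, rfl⟩ := Nat.exists_eq_add_of_le' hn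
  rw [Nat.add_sub_cancel, heckeT_two, heckeT_two_pow_succ, heckeT_two_pow_succ,
    heckeT_two_pow_succ]
  simp only [slashRowSum_add]
  have endpoint := slashRow_two_one h √2 (2 ^ (m + 1))
  have shifted := slashRowSum_halfTranslate_denom_one hsupp 1 m
  push_cast at endpoint
  rw [mul_one] at shifted
  linear_combination (norm := module)
    slashRowSum_diag_one_two_add h 1 1 (m + 1) + slashRowSum_diag_one_two_add h √2 2 m
    + slashRowSum_diag_two_one_denom_one hsupp 1 m + slashRowSum_diag_two_one_denom_two hsupp √2 m
    + slashRowSum_halfTranslate_denom_two hsupp √2 m + shifted - endpoint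
    - 2 • heckeT_two_pow_psiTwo_add h m
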